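/- arXiv:2210.05452 — 6 statements merged into one kernel-verified Lean document; each statement's English description precedes it below -/
import Mathlib

section
/- If f : ℝ → ℝ is continuous with f(0) = 0 and t ↦ f(t)/|t| is strictly increasing on ℝ \ {0}, then the function t ↦ (1/2) f(t) t − F(t) is strictly increasing on (0, ∞), where F(t) = ∫₀ᵗ f(s) ds. -/
/-!
On `(0, ∞)` write `f t = g t * t` with `g t = f t / t` strictly increasing. For `0 < a < b`,
`f s ≤ g b * s` on `[a, b]`, strictly at `s = a`, so `∫ a..b f < g b * (b² - a²) / 2`; subtracting,
the increment of `t ↦ f t * t / 2 - F t` from `a` to `b` exceeds `(g b - g a) * a² / 2 > 0`.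
-/

open Set intervalIntegral

theorem integral_lt_div_mul_sq_sub_sq {f : ℝ → ℝ} {a b : ℝ} (ha : 0 < a) (hab : a < b)
    (hf : ContinuousOn f (Icc a b)) (hmono : StrictMonoOn (fun t => f t / t) (Icc a b)) :
    ∫ s in a..b, f s < f b / b * ((b ^ 2 - a ^ 2) / 2) := by
  have hb_mem : b ∈ Icc a b := right_mem_Icc.2 hab.le
  have hle : ∀ x ∈ Icc a b, f x ≤ f b / b * x := fun x hx => by
    have hx0 : 0 < x := ha.trans_le hx.1
    calc f x = f x / x * x := (div_mul_cancel₀ _ hx0.ne').symm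
      _ ≤ f b / b * x := mul_le_mul_of_nonneg_right (hmono.monotoneOn hx hb_mem hx.2) hx0.le
  have hlt : f a < f b / b * a :=
    calc f a = f a / a * a := (div_mul_cancel₀ _ ha.ne').symm
      _ < f b / b * a := mul_lt_mul_of_pos_right (hmono (left_mem_Icc.2 hab.le) hb_mem hab) ha
  calc ∫ s in a..b, f s < ∫ s in a..b, f b / b * s :=
        integral_lt_integral_of_continuousOn_of_le_of_exists_lt hab hf (by fun_prop)
          (fun x hx => hle x (Ioc_subset_Icc_self hx))
          ⟨a, left_mem_Icc.2 hab.le, hlt⟩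
    _ = f b / b * ((b ^ 2 - a ^ 2) / 2) := by rw [integral_const_mul, integral_id]

theorem strictMonoOn_half_mul_sub_integral {f : ℝ → ℝ} (hf : Continuous f)
    (hmono : StrictMonoOn (fun t => f t / t) (Ioi 0)) :
    StrictMonoOn (fun t => (1/2) * f t * t - ∫ s in (0:ℝ)..t, f s) (Ioi 0) := by
  intro a (ha : 0 < a) b (hb : 0 < b) hab
  have hint := integral_lt_div_mul_sq_sub_sq ha hab hf.continuousOn
    (hmono.mono fun x hx => ha.trans_le hx.1)
  have hg : f a / a < f b / b := hmono ha hb hab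
  have hfa : f a = f a / a * a := (div_mul_cancel₀ _ ha.ne').symm
  have hfb : f b = f b / b * b := (div_mul_cancel₀ _ hb.ne').symm
  dsimp only
  rw [← integral_add_adjacent_intervals (hf.intervalIntegrable 0 a) (hf.intervalIntegrable a b),
    hfa, hfb]
  nlinarith [mul_pos ha ha]

theorem stmt0_general (f : ℝ → ℝ) (hf : Continuous f)
    (hmono : StrictMonoOn (fun t => f t / |t|) {t : ℝ | t ≠ 0}) :
    StrictMonoOn (fun t => (1/2) * f t * t - ∫ s in (0:ℝ)..t, f s) (Set.Ioi (0:ℝ)) := by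
  refine strictMonoOn_half_mul_sub_integral hf fun a (ha : 0 < a) b (hb : 0 < b) hab => ?_
  simpa only [abs_of_pos ha, abs_of_pos hb] using hmono ha.ne' hb.ne' hab

theorem stmt0 (f : ℝ → ℝ) (hf : Continuous f) (hf0 : f 0 = 0)
    (hmono : StrictMonoOn (fun t => f t / |t|) {t : ℝ | t ≠ 0}) :
    StrictMonoOn (fun t => (1/2) * f t * t - ∫ s in (0:ℝ)..t, f s) (Set.Ioi (0:ℝ)) :=
  stmt0_general f hf hmono
end

section
/- If f : ℝ → ℝ is continuous with f(0) = 0 and t ↦ f(t)/|t| is strictly increasing on ℝ \ {0}, then the function t ↦ F(t)/t² is strictly increasing on (0, ∞) and strictly decreasing on (−∞, 0), where F(t) = ∫₀ᵗ f(s) ds. -/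
/-!
Write `F t = ∫₀ᵗ f`. For `t > 0`, monotonicity of `f s / s` gives `f s < (f t / t) s` on `(0, t)`,
and integrating yields `2 F t < t f t`, which is exactly the positivity of
`(F t / t²)' = (t f t - 2 F t) / t³`. The statement on `(-∞, 0)` is the one on `(0, ∞)` applied to
the reflected function `s ↦ -f (-s)`, whose primitive is `t ↦ F (-t)`.
-/

open Set intervalIntegral

section

variable {f : ℝ → ℝ}

theorem two_mul_integral_lt_mul_of_strictMonoOn_div (hf : Continuous f)
    (hmono : StrictMonoOn (fun t => f t / t) (Ioi 0)) {t : ℝ} (ht : 0 < t) :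
    2 * ∫ s in (0:ℝ)..t, f s < t * f t := by
  have hle : ∀ s ∈ Ioc 0 t, f s ≤ f t / t * s := fun s hs => by
    have : f s / s ≤ f t / t := hmono.monotoneOn hs.1 ht hs.2
    rwa [div_le_iff₀ hs.1] at this
  have hlt : f (t / 2) < f t / t * (t / 2) := by
    have : f (t / 2) / (t / 2) < f t / t := hmono (half_pos ht) ht (half_lt_self ht)
    rwa [div_lt_iff₀ (half_pos ht)] at this
  have hint : ∫ s in (0:ℝ)..t, f s < ∫ s in (0:ℝ)..t, f t / t * s :=
    integral_lt_integral_of_continuousOn_of_le_of_exists_lt ht hf.continuousOn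
      (by fun_prop) hle ⟨t / 2, ⟨(half_pos ht).le, (half_lt_self ht).le⟩, hlt⟩
  have hlin : ∫ s in (0:ℝ)..t, f t / t * s = t * f t / 2 := by
    rw [integral_const_mul, integral_id]
    field_simp
    ring
  linarith

theorem strictMonoOn_integral_div_sq (hf : Continuous f)
    (hmono : StrictMonoOn (fun t => f t / t) (Ioi 0)) :
    StrictMonoOn (fun t => (∫ s in (0:ℝ)..t, f s) / t ^ 2) (Ioi 0) := by
  set F : ℝ → ℝ := fun t => ∫ s in (0:ℝ)..t, f s
  have hderiv : ∀ x ≠ 0, HasDerivAt (fun t => F t / t ^ 2)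
      ((x * f x - 2 * F x) / x ^ 3) x := fun x hx => by
    have h : HasDerivAt (fun t => F t / t ^ 2) _ x :=
      (hf.integral_hasStrictDerivAt 0 x).hasDerivAt.div (hasDerivAt_pow 2 x) (pow_ne_zero 2 hx)
    convert h using 1
    field_simp
    ring
  refine strictMonoOn_of_deriv_pos (convex_Ioi 0)
    (fun x hx => (hderiv x (ne_of_gt hx)).continuousAt.continuousWithinAt) fun x hx => ?_
  rw [interior_Ioi] at hx
  rw [(hderiv x (ne_of_gt hx)).deriv]
  have := two_mul_integral_lt_mul_of_strictMonoOn_div hf hmono hx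
  exact div_pos (by linarith) (pow_pos hx 3)

theorem integral_neg_comp_neg (t : ℝ) :
    ∫ s in (0:ℝ)..-t, -f (-s) = ∫ s in (0:ℝ)..t, f s := by
  rw [intervalIntegral.integral_neg, integral_comp_neg, neg_neg, neg_zero, integral_symm, neg_neg]

end

theorem stmt1_general (f : ℝ → ℝ) (hf : Continuous f)
    (hmono : StrictMonoOn (fun t => f t / |t|) {t : ℝ | t ≠ 0}) :
    StrictMonoOn (fun t => (∫ s in (0:ℝ)..t, f s) / t ^ 2) (Set.Ioi (0:ℝ)) ∧
    StrictAntiOn (fun t => (∫ s in (0:ℝ)..t, f s) / t ^ 2) (Set.Iio (0:ℝ)) := by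
  constructor
  · refine strictMonoOn_integral_div_sq hf ?_
    refine (hmono.mono fun t ht => ne_of_gt ht).congr fun t ht => ?_
    simp only [abs_of_pos (mem_Ioi.1 ht)]
  · have hreflect : StrictMonoOn (fun t => -f (-t) / t) (Ioi 0) := fun a ha b hb hab => by
      have := hmono (neg_ne_zero.2 (ne_of_gt hb)) (neg_ne_zero.2 (ne_of_gt ha)) (neg_lt_neg hab)
      simp only [abs_neg, abs_of_pos (mem_Ioi.1 ha), abs_of_pos (mem_Ioi.1 hb)] at this
      simp only [neg_div]
      linarith
    intro a ha b hb hab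
    have := strictMonoOn_integral_div_sq (by fun_prop) hreflect
      (neg_pos.2 (mem_Iio.1 hb)) (neg_pos.2 (mem_Iio.1 ha)) (neg_lt_neg hab)
    simpa only [integral_neg_comp_neg, neg_sq] using this

theorem stmt1 (f : ℝ → ℝ) (hf : Continuous f) (hf0 : f 0 = 0)
    (hmono : StrictMonoOn (fun t => f t / |t|) {t : ℝ | t ≠ 0}) :
    StrictMonoOn (fun t => (∫ s in (0:ℝ)..t, f s) / t ^ 2) (Set.Ioi (0:ℝ)) ∧
    StrictAntiOn (fun t => (∫ s in (0:ℝ)..t, f s) / t ^ 2) (Set.Iio (0:ℝ)) :=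
  stmt1_general f hf hmono
end

section
/- If f : ℝ → ℝ is continuous with f(0) = 0 and t ↦ f(t)/|t| is strictly increasing on ℝ \ {0}, then f(t)/t > 2F(t)/t² for every t ≠ 0, where F(t) = ∫₀ᵗ f(s) ds. -/
open Set intervalIntegral

theorem stmt2 (f : ℝ → ℝ) (hf : Continuous f) (hf0 : f 0 = 0)
    (hmono : StrictMonoOn (fun t => f t / |t|) {t : ℝ | t ≠ 0}) :
    ∀ t : ℝ, t ≠ 0 → f t / t > 2 * (∫ s in (0:ℝ)..t, f s) / t ^ 2 := by
  intro t ht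
  have ht2 : (0:ℝ) < t ^ 2 := by positivity
  have key : 2 * (∫ s in (0:ℝ)..t, f s) < f t * t := by
    set c : ℝ := f t / t with hc
    rcases ht.lt_or_gt with htneg | htpos
    · -- t < 0 : c * s < f s on (t, 0)
      have h1 : (∫ s in t..(0:ℝ), c * s) < ∫ s in t..(0:ℝ), f s := by
        apply integral_lt_integral_of_continuousOn_of_le_of_exists_lt htneg
          (by fun_prop) hf.continuousOn
        · intro x hx
          rcases eq_or_lt_of_le hx.2 with h0 | hxneg
          · simp [h0, hf0]
          · have hxne : x ≠ 0 := ne_of_lt hxneg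
            have := hmono.monotoneOn (a := t) (b := x) ht hxne hx.1.le
            simp only [abs_of_neg htneg, abs_of_neg hxneg] at this
            -- f t / (-t) ≤ f x / (-x)
            have hxpos : (0:ℝ) < -x := by linarith
            rw [div_le_div_iff₀ (by linarith) hxpos] at this
            rw [hc]
            rw [div_mul_eq_mul_div, div_le_iff_of_neg htneg]
            nlinarith
        · refine ⟨t / 2, ⟨by linarith, by linarith⟩, ?_⟩
          have hne : t / 2 ≠ 0 := by intro h; apply ht; linarith
          have := hmono (a := t) (b := t / 2) ht hne (by linarith)
          simp only [abs_of_neg htneg, abs_of_neg (show t/2 < 0 by linarith)] at this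
          rw [div_lt_div_iff₀ (by linarith) (by linarith : (0:ℝ) < -(t/2))] at this
          rw [hc, div_mul_eq_mul_div, div_lt_iff_of_neg htneg]
          nlinarith
      have h2 : (∫ s in t..(0:ℝ), c * s) = -(c * t ^ 2 / 2) := by
        rw [intervalIntegral.integral_const_mul, integral_id]
        ring
      have h3 : (∫ s in (0:ℝ)..t, f s) = -(∫ s in t..(0:ℝ), f s) :=
        (intervalIntegral.integral_symm _ _)
      have hct : c * t ^ 2 = f t * t := by
        rw [hc]; field_simp
      rw [h2] at h1
      nlinarith [h1, h3]
    · -- 0 < t : f s < c * s on (0, t)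
      have h1 : (∫ s in (0:ℝ)..t, f s) < ∫ s in (0:ℝ)..t, c * s := by
        apply integral_lt_integral_of_continuousOn_of_le_of_exists_lt htpos
          hf.continuousOn (by fun_prop)
        · intro x hx
          have hxpos : 0 < x := hx.1
          have hxne : x ≠ 0 := ne_of_gt hxpos
          have := hmono.monotoneOn (a := x) (b := t) hxne ht hx.2
          simp only [abs_of_pos htpos, abs_of_pos hxpos] at this
          rw [div_le_div_iff₀ hxpos htpos] at this
          rw [hc, div_mul_eq_mul_div, le_div_iff₀ htpos]
          nlinarith
        · refine ⟨t / 2, ⟨by linarith, by linarith⟩, ?_⟩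
          have hne : t / 2 ≠ 0 := by positivity
          have := hmono (a := t / 2) (b := t) hne ht (by linarith)
          simp only [abs_of_pos htpos, abs_of_pos (show (0:ℝ) < t/2 by linarith)] at this
          rw [div_lt_div_iff₀ (by linarith : (0:ℝ) < t/2) htpos] at this
          rw [hc, div_mul_eq_mul_div, lt_div_iff₀ htpos]
          nlinarith
      have h2 : (∫ s in (0:ℝ)..t, c * s) = c * t ^ 2 / 2 := by
        rw [intervalIntegral.integral_const_mul, integral_id]
        ring
      have hct : c * t ^ 2 = f t * t := by
        rw [hc]; field_simp
      rw [h2] at h1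
      nlinarith [h1]
  have : f t / t = f t * t / t ^ 2 := by
    field_simp
  rw [this, gt_iff_lt, div_lt_div_iff₀ ht2 ht2]
  nlinarith [key]
end

section
/- Let f : ℝ → ℝ be continuous with f(0)=0 and t ↦ f(t)/|t| strictly increasing on ℝ \ {0}. If u ∈ H⁰¹(Ω) \ {0} satisfies ‖∇u‖²_{L²} = ∫_Ω f(u) u dx, then I(u) > 0, where I(u) = (1/2)‖∇u‖²_{L²} − ∫_Ω F(u) dx and F(t) = ∫₀ᵗ f(s) ds. -/
open Set MeasureTheory intervalIntegral

lemma key_pt (f : ℝ → ℝ) (hf : Continuous f) (hf0 : f 0 = 0)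
    (hmono : StrictMonoOn (fun t => f t / |t|) {t : ℝ | t ≠ 0}) {t : ℝ} (ht : t ≠ 0) :
    ∫ s in (0:ℝ)..t, f s < f t * t / 2 := by
  rcases ht.lt_or_gt with htn | htp
  · -- t < 0
    have hlt : ∫ s in t..(0:ℝ), (f t / t) * s < ∫ s in t..(0:ℝ), f s := by
      apply integral_lt_integral_of_continuousOn_of_le_of_exists_lt htn
        (by fun_prop) hf.continuousOn
      · intro x hx
        rcases eq_or_lt_of_le hx.2 with h0 | h0
        · simp [h0, hf0]
        · have hxne : x ≠ 0 := ne_of_lt h0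
          have := hmono (show t ∈ {t : ℝ | t ≠ 0} from ht) (show x ∈ _ from hxne) hx.1
          simp only at this
          rw [abs_of_neg htn, abs_of_neg h0] at this
          have h1 : f t / t * x = (f t / (-t)) * (-x) := by ring
          rw [h1]
          have h2 : f x = (f x / (-x)) * (-x) := by field_simp
          rw [h2]
          exact le_of_lt (mul_lt_mul_of_pos_right this (by linarith))
      · refine ⟨t/2, ⟨by linarith, by linarith⟩, ?_⟩
        have hxne : t/2 ≠ 0 := by intro h; apply ht; linarith
        have := hmono (show t ∈ {t : ℝ | t ≠ 0} from ht) (show t/2 ∈ _ from hxne) (by linarith)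
        simp only at this
        rw [abs_of_neg htn, abs_of_neg (show t/2 < 0 by linarith)] at this
        have h1 : f t / t * (t/2) = (f t / (-t)) * (-(t/2)) := by ring
        rw [h1]
        have h2 : f (t/2) = (f (t/2) / (-(t/2))) * (-(t/2)) := by field_simp
        rw [h2]
        exact mul_lt_mul_of_pos_right this (by linarith)
    have hval : ∫ s in t..(0:ℝ), (f t / t) * s = -(f t * t / 2) := by
      rw [intervalIntegral.integral_const_mul, integral_id]
      field_simp; ring
    have hsym : ∫ s in (0:ℝ)..t, f s = -∫ s in t..(0:ℝ), f s :=
      intervalIntegral.integral_symm t 0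
    rw [hval] at hlt
    rw [hsym]
    linarith
  · -- t > 0
    have hlt : ∫ s in (0:ℝ)..t, f s < ∫ s in (0:ℝ)..t, (f t / t) * s := by
      apply integral_lt_integral_of_continuousOn_of_le_of_exists_lt htp
        hf.continuousOn (by fun_prop)
      · intro x hx
        rcases eq_or_lt_of_le hx.2 with h0 | h0
        · rw [h0]; rw [div_mul_cancel₀]; exact ne_of_gt htp
        · have hxne : x ≠ 0 := ne_of_gt hx.1
          have := hmono (show x ∈ {t : ℝ | t ≠ 0} from hxne) (show t ∈ _ from ht) h0
          simp only at this
          rw [abs_of_pos htp, abs_of_pos hx.1] at this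
          have h2 : f x = (f x / x) * x := by field_simp
          rw [h2]
          exact le_of_lt (mul_lt_mul_of_pos_right this hx.1)
      · refine ⟨t/2, ⟨by linarith, by linarith⟩, ?_⟩
        have hxne : t/2 ≠ 0 := by positivity
        have := hmono (show t/2 ∈ {t : ℝ | t ≠ 0} from hxne) (show t ∈ _ from ht) (by linarith)
        simp only at this
        rw [abs_of_pos htp, abs_of_pos (show (0:ℝ) < t/2 by linarith)] at this
        have h2 : f (t/2) = (f (t/2) / (t/2)) * (t/2) := by field_simp
        rw [h2]
        exact mul_lt_mul_of_pos_right this (by linarith)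
    have hval : ∫ s in (0:ℝ)..t, (f t / t) * s = f t * t / 2 := by
      rw [intervalIntegral.integral_const_mul, integral_id]
      field_simp; ring
    linarith [hval ▸ hlt]

theorem stmt9 (N : ℕ) (Ω : Set (EuclideanSpace ℝ (Fin N))) (hΩm : MeasurableSet Ω)
    (hΩb : Bornology.IsBounded Ω)
    (f : ℝ → ℝ) (hf : Continuous f) (hf0 : f 0 = 0)
    (hmono : StrictMonoOn (fun t => f t / |t|) {t : ℝ | t ≠ 0})
    (u : EuclideanSpace ℝ (Fin N) → ℝ) (hu : Measurable u)
    -- u ≠ 0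
    (hne : volume {x ∈ Ω | u x ≠ 0} ≠ 0)
    (hint1 : IntegrableOn (fun x => f (u x) * u x) Ω volume)
    (hint2 : IntegrableOn (fun x => ∫ s in (0:ℝ)..(u x), f s) Ω volume)
    -- Nehari identity: ‖∇u‖² = ∫ f(u) u =: G
    (G : ℝ) (hG : G = ∫ x in Ω, f (u x) * u x) :
    0 < (1/2) * G - ∫ x in Ω, (∫ s in (0:ℝ)..(u x), f s) := by
  set h : EuclideanSpace ℝ (Fin N) → ℝ :=
    fun x => f (u x) * u x / 2 - ∫ s in (0:ℝ)..(u x), f s with hh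
  have hnonneg : ∀ x, 0 ≤ h x := by
    intro x
    by_cases hx : u x = 0
    · simp [hh, hx, hf0]
    · have := key_pt f hf hf0 hmono hx
      simp only [hh]; linarith
  have hpos : ∀ x, u x ≠ 0 → 0 < h x := by
    intro x hx
    have := key_pt f hf hf0 hmono hx
    simp only [hh]; linarith
  have hhi : IntegrableOn h Ω volume := (hint1.div_const 2).sub hint2
  have hI : 0 < ∫ x in Ω, h x := by
    rw [setIntegral_pos_iff_support_of_nonneg_ae (Filter.Eventually.of_forall hnonneg) hhi]
    refine lt_of_lt_of_le (pos_iff_ne_zero.2 hne) (measure_mono ?_)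
    intro x hx
    exact ⟨ne_of_gt (hpos x hx.2), hx.1⟩
  have hsub : ∫ x in Ω, h x =
      (∫ x in Ω, f (u x) * u x / 2) - ∫ x in Ω, (∫ s in (0:ℝ)..(u x), f s) :=
    integral_sub (hint1.div_const 2) hint2
  rw [hsub, MeasureTheory.integral_div] at hI
  rw [hG]
  linarith
end

section
/- For f(t) = t|t| on |t| ≤ θ and f(t) = η t⁵/(a + t⁴) on |t| > θ with a = θ³(η − θ), θ > 0, η > θ, the map t ↦ f(t)/|t| is strictly increasing on (0, ∞). -/
open Set

theorem stmt11 (θ η a : ℝ) (hθ : 0 < θ) (hη : θ < η) (ha : a = θ ^ 3 * (η - θ))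
    (f : ℝ → ℝ)
    (hfdef : ∀ t, f t = if |t| ≤ θ then t * |t| else η * t ^ 5 / (a + t ^ 4)) :
    StrictMonoOn (fun t => f t / |t|) (Set.Ioi (0:ℝ)) := by
  have ha0 : 0 < a := by
    rw [ha]; exact mul_pos (pow_pos hθ 3) (sub_pos.mpr hη)
  -- g t = t for 0 < t ≤ θ, g t = η t^4/(a+t^4) for t > θ
  have hg1 : ∀ t : ℝ, 0 < t → t ≤ θ → f t / |t| = t := by
    intro t ht hle
    rw [hfdef t, abs_of_pos ht, if_pos hle]
    field_simp
  have hg2 : ∀ t : ℝ, θ < t → f t / |t| = η * t ^ 4 / (a + t ^ 4) := by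
    intro t ht
    have ht0 : 0 < t := hθ.trans ht
    have hat : 0 < a + t ^ 4 := by positivity
    rw [hfdef t, abs_of_pos ht0, if_neg (not_le.mpr ht)]
    field_simp
  -- key: for t > θ, g t > θ
  have hkey : ∀ t : ℝ, θ < t → θ < η * t ^ 4 / (a + t ^ 4) := by
    intro t ht
    have ht0 : 0 < t := hθ.trans ht
    have hat : 0 < a + t ^ 4 := by positivity
    rw [lt_div_iff₀ hat, ha]
    have h4 : θ ^ 4 < t ^ 4 := pow_lt_pow_left₀ ht hθ.le (by norm_num)
    nlinarith [h4, sub_pos.mpr hη]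
  intro x hx y hy hxy
  simp only [mem_Ioi] at hx hy
  rcases le_or_gt x θ with hxθ | hxθ
  · rcases le_or_gt y θ with hyθ | hyθ
    · simp only [hg1 x hx hxθ, hg1 y hy hyθ]; exact hxy
    · simp only [hg1 x hx hxθ, hg2 y hyθ]
      exact lt_of_le_of_lt hxθ (hkey y hyθ)
  · have hyθ : θ < y := hxθ.trans hxy
    simp only [hg2 x hxθ, hg2 y hyθ]
    have hx0 : 0 < x := hθ.trans hxθ
    have hax : 0 < a + x ^ 4 := by positivity
    have hay : 0 < a + y ^ 4 := by positivity
    rw [div_lt_div_iff₀ hax hay]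
    have h4 : x ^ 4 < y ^ 4 := pow_lt_pow_left₀ hxy hx0.le (by norm_num)
    nlinarith [mul_pos (mul_pos (hθ.trans hη) ha0) (sub_pos.mpr h4)]
end

section
/- Let I : H⁰¹(Ω) → ℝ, I(u) = (1/2)‖∇u‖² − ∫_Ω F(x,u) dx, where F is a Carathéodory primitive satisfying |F(x,t)| ≤ C t² and lim_{|t|→∞} 2F(x,t)/t² = η(x) uniformly, with λ₁(η) > 1 (i.e., ∫ η u² ≤ (1/λ₁(η))‖∇u‖² for all u). Then I is coercive: I(u_n) → ∞ along any sequence with ‖∇u_n‖ → ∞. -/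
open Set MeasureTheory Filter Topology

/-!
Away from a ball `|t| < R` the hypothesis on `2F(x,t)/t²` gives `2F(x,t) ≤ (η(x) + ε) t²`, and inside
it the growth bound `|F| ≤ C t²` (which also forces `|η| ≤ 2C`) makes the difference bounded. Integrating,
`2∫F(x,u) ≤ ∫ η u² + ε ∫ u² + M |Ω|`, and the two Poincaré inequalities turn this into
`I(u) ≥ ((1 - 1/λ₁)/2 - ε C₀/2)‖∇u‖² - M|Ω|/2`, which is coercive once `ε C₀ < 1 - 1/λ₁`.
-/

section QuadraticGrowth

variable {X : Type*} {s : Set X} {F : X → ℝ → ℝ} {η : X → ℝ} {C : ℝ}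

theorem abs_le_of_sq_bound_of_tendsto (hFbd : ∀ x ∈ s, ∀ t : ℝ, |F x t| ≤ C * t ^ 2)
    (hFlim : ∀ ε > (0:ℝ), ∃ R : ℝ, ∀ x ∈ s, ∀ t : ℝ, R ≤ |t| → |2 * F x t / t ^ 2 - η x| < ε)
    {x : X} (hx : x ∈ s) : |η x| ≤ 2 * C := by
  refine le_of_forall_pos_lt_add fun ε hε => ?_
  obtain ⟨R, hR⟩ := hFlim ε hε
  set t := max R 1
  have ht : 0 < t := lt_max_of_lt_right one_pos
  have hq : |2 * F x t / t ^ 2| ≤ 2 * C := by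
    rw [abs_div, abs_mul, abs_two, abs_of_pos (pow_pos ht 2), div_le_iff₀ (pow_pos ht 2)]
    linarith [hFbd x hx t]
  have hclose := abs_lt.mp (hR x hx t (by rw [abs_of_pos ht]; exact le_max_left R 1))
  have hq' := abs_le.mp hq
  exact abs_lt.mpr ⟨by linarith, by linarith⟩

theorem exists_two_mul_le_add_sq_mul (hC : 0 ≤ C)
    (hFbd : ∀ x ∈ s, ∀ t : ℝ, |F x t| ≤ C * t ^ 2)
    (hFlim : ∀ ε > (0:ℝ), ∃ R : ℝ, ∀ x ∈ s, ∀ t : ℝ, R ≤ |t| → |2 * F x t / t ^ 2 - η x| < ε)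
    {ε : ℝ} (hε : 0 < ε) :
    ∃ M, ∀ x ∈ s, ∀ t : ℝ, 2 * F x t ≤ η x * t ^ 2 + ε * t ^ 2 + M := by
  obtain ⟨R, hR⟩ := hFlim ε hε
  set R' := max R 1
  refine ⟨4 * C * R' ^ 2, fun x hx t => ?_⟩
  rcases le_or_gt R' |t| with hbig | hsmall
  · have ht : t ≠ 0 := abs_pos.mp (lt_of_lt_of_le (lt_max_of_lt_right one_pos) hbig)
    have hq : 2 * F x t / t ^ 2 ≤ η x + ε := by
      linarith [(abs_lt.mp (hR x hx t ((le_max_left R 1).trans hbig))).2]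
    have hF : 2 * F x t = 2 * F x t / t ^ 2 * t ^ 2 := by field_simp
    have := mul_le_mul_of_nonneg_right hq (sq_nonneg t)
    nlinarith [sq_nonneg R']
  · have ht2 : t ^ 2 ≤ R' ^ 2 := by
      rw [← sq_abs]; exact pow_le_pow_left₀ (abs_nonneg t) hsmall.le 2
    have hη := abs_le.mp (abs_le_of_sq_bound_of_tendsto hFbd hFlim hx)
    have hF := (abs_le.mp (hFbd x hx t)).2
    nlinarith [sq_nonneg t]

end QuadraticGrowth

theorem setIntegral_le_add_mul_add_const {α : Type*} [MeasurableSpace α] {μ : Measure α}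
    {s : Set α} (hs : MeasurableSet s) (hμs : μ s ≠ ⊤) {f g h : α → ℝ} {b c : ℝ}
    (hf : IntegrableOn f s μ) (hg : IntegrableOn g s μ) (hh : IntegrableOn h s μ)
    (hle : ∀ x ∈ s, f x ≤ g x + b * h x + c) :
    ∫ x in s, f x ∂μ ≤ ∫ x in s, g x ∂μ + b * ∫ x in s, h x ∂μ + c * μ.real s := by
  have hbh : IntegrableOn (fun x => b * h x) s μ := hh.const_mul b
  have hgbh : IntegrableOn (fun x => g x + b * h x) s μ := hg.add hbh
  have hc : IntegrableOn (fun _ => c) s μ := integrableOn_const hμs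
  calc ∫ x in s, f x ∂μ ≤ ∫ x in s, (g x + b * h x + c) ∂μ :=
        setIntegral_mono_on hf (hgbh.add hc) hs hle
    _ = ∫ x in s, g x ∂μ + b * ∫ x in s, h x ∂μ + c * μ.real s := by
        rw [integral_add hgbh hc, integral_add hg hbh, integral_const_mul,
          setIntegral_const, smul_eq_mul, mul_comm c]

theorem tendsto_atTop_of_mul_sq_sub_le {ι : Type*} {l : Filter ι} {f g : ι → ℝ} {c K : ℝ}
    (hc : 0 < c) (hle : ∀ n, c * g n ^ 2 - K ≤ f n) (hg : Tendsto g l atTop) :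
    Tendsto f l atTop :=
  tendsto_atTop_mono hle <| (Tendsto.const_mul_atTop hc
    ((tendsto_pow_atTop two_ne_zero).comp hg)).atTop_add tendsto_const_nhds

/- `g n` stands for `‖∇u_n‖`; both Poincaré inequalities enter as hypotheses. -/
theorem stmt17_general (N : ℕ) (Ω : Set (EuclideanSpace ℝ (Fin N))) (hΩm : MeasurableSet Ω)
    (hΩfin : volume Ω ≠ ⊤)
    (F : EuclideanSpace ℝ (Fin N) → ℝ → ℝ) (η : EuclideanSpace ℝ (Fin N) → ℝ)
    (C : ℝ) (hC : 0 < C)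
    (hFbd : ∀ x ∈ Ω, ∀ t : ℝ, |F x t| ≤ C * t ^ 2)
    (hFlim : ∀ ε > (0:ℝ), ∃ R : ℝ, ∀ x ∈ Ω, ∀ t : ℝ, R ≤ |t| →
      |2 * F x t / t ^ 2 - η x| < ε)
    (lam : ℝ) (hlam : 1 < lam)
    (u : ℕ → EuclideanSpace ℝ (Fin N) → ℝ) (g : ℕ → ℝ)
    (hintF : ∀ n, IntegrableOn (fun x => F x (u n x)) Ω volume)
    (hint2 : ∀ n, IntegrableOn (fun x => u n x ^ 2) Ω volume)
    (hintη : ∀ n, IntegrableOn (fun x => η x * u n x ^ 2) Ω volume)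
    -- weighted Poincaré inequality with first eigenvalue lam = λ₁(η) > 1
    (hwp : ∀ n, ∫ x in Ω, η x * u n x ^ 2 ≤ (1 / lam) * g n ^ 2)
    -- plain Poincaré inequality
    (C0 : ℝ) (hC0 : 0 < C0) (hp : ∀ n, ∫ x in Ω, u n x ^ 2 ≤ C0 * g n ^ 2)
    (hgg : Tendsto g atTop atTop) :
    Tendsto (fun n => (1/2) * g n ^ 2 - ∫ x in Ω, F x (u n x)) atTop atTop := by
  have hgap : 0 < 1 - 1 / lam := by
    rw [sub_pos, div_lt_one (by linarith)]; exact hlam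
  set ε := (1 - 1 / lam) / (2 * C0)
  have hε : 0 < ε := by positivity
  obtain ⟨M, hM⟩ := exists_two_mul_le_add_sq_mul hC.le hFbd hFlim hε
  refine tendsto_atTop_of_mul_sq_sub_le (c := (1 - 1 / lam) / 4) (K := M * volume.real Ω / 2)
    (by positivity) (fun n => ?_) hgg
  have hI := setIntegral_le_add_mul_add_const hΩm hΩfin ((hintF n).const_mul 2) (hintη n)
    (hint2 n) fun x hx => hM x hx (u n x)
  rw [integral_const_mul] at hI
  have hεp : ε * ∫ x in Ω, u n x ^ 2 ≤ ε * (C0 * g n ^ 2) :=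
    mul_le_mul_of_nonneg_left (hp n) hε.le
  have hεC0 : ε * (C0 * g n ^ 2) = (1 - 1 / lam) / 2 * g n ^ 2 := by
    simp only [ε]; field_simp
  linarith [hwp n]

theorem stmt17 (N : ℕ) (Ω : Set (EuclideanSpace ℝ (Fin N))) (hΩm : MeasurableSet Ω)
    (hΩfin : volume Ω ≠ ⊤)
    (F : EuclideanSpace ℝ (Fin N) → ℝ → ℝ) (η : EuclideanSpace ℝ (Fin N) → ℝ)
    (C : ℝ) (hC : 0 < C)
    (hFbd : ∀ x ∈ Ω, ∀ t : ℝ, |F x t| ≤ C * t ^ 2)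
    (hFlim : ∀ ε > (0:ℝ), ∃ R : ℝ, ∀ x ∈ Ω, ∀ t : ℝ, R ≤ |t| →
      |2 * F x t / t ^ 2 - η x| < ε)
    (lam : ℝ) (hlam : 1 < lam)
    (u : ℕ → EuclideanSpace ℝ (Fin N) → ℝ) (g : ℕ → ℝ) (hg : ∀ n, 0 ≤ g n)
    (hmeas : ∀ n, Measurable (u n))
    (hintF : ∀ n, IntegrableOn (fun x => F x (u n x)) Ω volume)
    (hint2 : ∀ n, IntegrableOn (fun x => u n x ^ 2) Ω volume)
    (hintη : ∀ n, IntegrableOn (fun x => η x * u n x ^ 2) Ω volume)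
    -- weighted Poincaré inequality with first eigenvalue lam = λ₁(η) > 1
    (hwp : ∀ n, ∫ x in Ω, η x * u n x ^ 2 ≤ (1 / lam) * g n ^ 2)
    -- plain Poincaré inequality
    (C0 : ℝ) (hC0 : 0 < C0) (hp : ∀ n, ∫ x in Ω, u n x ^ 2 ≤ C0 * g n ^ 2)
    (hgg : Tendsto g atTop atTop) :
    Tendsto (fun n => (1/2) * g n ^ 2 - ∫ x in Ω, F x (u n x)) atTop atTop :=
  stmt17_general N Ω hΩm hΩfin F η C hC hFbd hFlim lam hlam u g hintF hint2 hintη hwp C0 hC0 hp hgg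
end
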